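/- arXiv:2307.09129 — 4 statements merged into one kernel-verified Lean document; each statement's English description precedes it below -/
import Mathlib

section
/- Let p be a prime, r a positive integer and n = p^r. Fix real numbers α ≠ 0, β, γ, η. Then the characteristic polynomial of the universal adjacency matrix U(P(Z_n)) equals (X − (α(p^r − 1) + β(p^r − 1) + η p^r + γ))·(X − (−α + β(p^r − 1) + γ))^{p^r − 1}; that is, U(P(Z_{p^r})) has the eigenvalue α(p^r − 1) + β(p^r − 1) + η p^r + γ with multiplicity 1 (with eigenvector the all-ones vector) and the eigenvalue −α + β(p^r − 1) + γ with multiplicity p^r − 1. -/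
open Matrix Polynomial

/-- The (undirected) power graph of an additive group: distinct `u`, `v` are adjacent
iff one is an integer multiple of the other. -/
def addPowerGraph (G : Type*) [AddGroup G] : SimpleGraph G where
  Adj u v := u ≠ v ∧ ∃ m : ℤ, u = m • v ∨ v = m • u
  symm := by
    constructor
    rintro u v ⟨huv, m, hm | hm⟩
    · exact ⟨huv.symm, m, Or.inr hm⟩
    · exact ⟨huv.symm, m, Or.inl hm⟩
  loopless := ⟨fun u h => h.1 rfl⟩

/-- The universal adjacency matrix `U(G) = α A + β D + γ I + η J` of a finite graph. -/
noncomputable def univAdj {V : Type*} [Fintype V] (G : SimpleGraph V)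
    (α β γ η : ℝ) : Matrix V V ℝ :=
  letI := Classical.decEq V
  letI : DecidableRel G.Adj := Classical.decRel _
  α • G.adjMatrix ℝ + β • Matrix.diagonal (fun v => (G.degree v : ℝ))
    + γ • (1 : Matrix V V ℝ) + η • Matrix.of (fun _ _ => (1 : ℝ))

/-!
In a cyclic group of order `p ^ r` the element orders are powers of `p`, hence comparable under
divisibility, and in a cyclic group an element whose order divides that of `v` is a multiple of
`v`. So the power graph of `ℤ_{p^r}` is complete, and `U = (-α + β (n - 1) + γ) I + (α + η) J`
with `n = p ^ r`. Since `J` is the rank-one matrix `𝟙 𝟙ᵀ`, the characteristic polynomial follows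
from that of a rank-one matrix, shifted by a scalar.
-/

theorem mem_zmultiples_of_addOrderOf_dvd {G : Type*} [AddGroup G] [Finite G] [IsAddCyclic G]
    {u v : G} (h : addOrderOf u ∣ addOrderOf v) : u ∈ AddSubgroup.zmultiples v := by
  classical
  have := Fintype.ofFinite G
  set d := addOrderOf v
  -- The `d`-torsion of a cyclic group has at most `d` elements, and `zmultiples v` supplies `d`.
  let torsion : Finset G := {a | d • a = 0}
  have hsub : (AddSubgroup.zmultiples v : Set G).toFinset ⊆ torsion := fun a ha => by
    rw [Set.mem_toFinset, SetLike.mem_coe] at ha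
    simpa [torsion] using addOrderOf_dvd_iff_nsmul_eq_zero.1 (addOrderOf_dvd_of_mem_zmultiples ha)
  have hcard : torsion.card ≤ (AddSubgroup.zmultiples v : Set G).toFinset.card := by
    rw [Set.toFinset_card, ← Nat.card_eq_fintype_card]
    change torsion.card ≤ Nat.card (AddSubgroup.zmultiples v)
    rw [Nat.card_zmultiples]
    exact IsAddCyclic.card_nsmul_eq_zero_le (addOrderOf_pos v)
  have hu : u ∈ torsion := by simpa [torsion] using addOrderOf_dvd_iff_nsmul_eq_zero.1 h
  rw [← Finset.eq_of_subset_of_card_le hsub hcard] at hu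
  simpa using hu

theorem addPowerGraph_eq_top_of_card_eq_prime_pow {G : Type*} [AddGroup G] [Finite G]
    [IsAddCyclic G] {p r : ℕ} (hp : p.Prime) (hG : Nat.card G = p ^ r) :
    addPowerGraph G = ⊤ := by
  have hpow (u : G) : ∃ i, addOrderOf u = p ^ i := by
    obtain ⟨i, -, hi⟩ := (Nat.dvd_prime_pow hp).1 (hG ▸ addOrderOf_dvd_natCard u)
    exact ⟨i, hi⟩
  ext u v
  refine ⟨fun h => h.1, fun huv => ⟨huv, ?_⟩⟩
  obtain ⟨i, hi⟩ := hpow u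
  obtain ⟨j, hj⟩ := hpow v
  rcases le_total i j with hij | hji
  · obtain ⟨m, hm⟩ := AddSubgroup.mem_zmultiples_iff.1 <|
      mem_zmultiples_of_addOrderOf_dvd (hi ▸ hj ▸ pow_dvd_pow p hij)
    exact ⟨m, Or.inl hm.symm⟩
  · obtain ⟨m, hm⟩ := AddSubgroup.mem_zmultiples_iff.1 <|
      mem_zmultiples_of_addOrderOf_dvd (hj ▸ hi ▸ pow_dvd_pow p hji)
    exact ⟨m, Or.inr hm.symm⟩

section Regular

variable {V : Type*} [Fintype V] [DecidableEq V]

theorem univAdj_eq_of_isRegularOfDegree {G : SimpleGraph V} [DecidableRel G.Adj] {k : ℕ}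
    (hG : G.IsRegularOfDegree k) (α β γ η : ℝ) :
    univAdj G α β γ η = α • G.adjMatrix ℝ + (β * k + γ) • 1 + η • of fun _ _ => 1 := by
  have hdeg : diagonal (fun v => (G.degree v : ℝ)) = (k : ℝ) • 1 := by
    ext u v
    simp [diagonal_apply, one_apply, hG.degree_eq]
  calc univAdj G α β γ η
      = α • G.adjMatrix ℝ + β • diagonal (fun v => (G.degree v : ℝ)) + γ • 1
          + η • of fun _ _ => 1 := by unfold univAdj; congr!
    _ = _ := by rw [hdeg, smul_smul, add_smul]; abel

theorem univAdj_mulVec_one_of_isRegularOfDegree {G : SimpleGraph V} [DecidableRel G.Adj]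
    {k : ℕ} (hG : G.IsRegularOfDegree k) (α β γ η : ℝ) :
    univAdj G α β γ η *ᵥ (fun _ => 1) =
      (α * k + β * k + γ + η * Fintype.card V) • fun _ => 1 := by
  have hA : G.adjMatrix ℝ *ᵥ (fun _ => 1) = fun _ => (k : ℝ) :=
    funext fun v => by simpa using G.adjMatrix_mulVec_const_apply_of_regular (a := (1 : ℝ)) hG
  have hJ : (of fun _ _ => 1 : Matrix V V ℝ) *ᵥ (fun _ => 1) = fun _ => (Fintype.card V : ℝ) :=
    funext fun v => by simp [mulVec, dotProduct]
  rw [univAdj_eq_of_isRegularOfDegree hG, add_mulVec, add_mulVec, smul_mulVec, smul_mulVec,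
    smul_mulVec, one_mulVec, hA, hJ]
  ext v
  simp only [Pi.add_apply, Pi.smul_apply, smul_eq_mul]
  ring

theorem univAdj_top [Nonempty V] (α β γ η : ℝ) :
    univAdj (⊤ : SimpleGraph V) α β γ η =
      scalar V (-α + β * (Fintype.card V - 1) + γ) + vecMulVec (fun _ => α + η) (fun _ => 1) := by
  rw [univAdj_eq_of_isRegularOfDegree .top, SimpleGraph.adjMatrix_top]
  ext u v
  rcases eq_or_ne u v with rfl | huv
  · simp only [Nat.cast_sub Fintype.card_pos, Matrix.add_apply, Matrix.smul_apply, of_apply,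
      if_true, one_apply_eq, scalar_apply, diagonal_apply_eq, vecMulVec, smul_eq_mul,
      Nat.cast_one]
    ring
  · simp [vecMulVec, huv]

end Regular

theorem charpoly_scalar_add_vecMulVec {R n : Type*} [CommRing R] [Fintype n] [DecidableEq n]
    [Nonempty n] (c : R) (u v : n → R) :
    (scalar n c + vecMulVec u v).charpoly =
      (X - C (c + u ⬝ᵥ v)) * (X - C c) ^ (Fintype.card n - 1) := by
  have hshift := charpoly_sub_scalar (vecMulVec u v) (-c)
  rw [sub_eq_add_neg, ← map_neg, neg_neg, add_comm] at hshift
  obtain ⟨N, hN⟩ : ∃ N, Fintype.card n = N + 1 := Nat.exists_eq_add_one.2 Fintype.card_pos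
  rw [hshift, charpoly_vecMulVec]
  simp only [hN, Nat.add_sub_cancel, sub_comp, mul_comp, pow_comp, C_comp, X_comp, map_neg,
    ← sub_eq_add_neg, smul_eq_C_mul, map_add]
  ring

theorem univAdj_powerGraph_zmod_primePow_general (p : ℕ) (hp : p.Prime) (r : ℕ)
    (α β γ η : ℝ) :
    haveI : NeZero (p ^ r) := ⟨pow_ne_zero r hp.ne_zero⟩
    Matrix.charpoly (univAdj (addPowerGraph (ZMod (p ^ r))) α β γ η) =
        (X - C (α * ((p : ℝ) ^ r - 1) + β * ((p : ℝ) ^ r - 1) + η * (p : ℝ) ^ r + γ))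
          * (X - C (-α + β * ((p : ℝ) ^ r - 1) + γ)) ^ (p ^ r - 1) ∧
      (univAdj (addPowerGraph (ZMod (p ^ r))) α β γ η).mulVec (fun _ => 1) =
        (α * ((p : ℝ) ^ r - 1) + β * ((p : ℝ) ^ r - 1) + η * (p : ℝ) ^ r + γ) •
          ((fun _ => 1) : ZMod (p ^ r) → ℝ) := by
  have : NeZero (p ^ r) := ⟨pow_ne_zero r hp.ne_zero⟩
  have hcard : (Fintype.card (ZMod (p ^ r)) : ℝ) = (p : ℝ) ^ r := by simp
  rw [addPowerGraph_eq_top_of_card_eq_prime_pow hp (Nat.card_zmod _)]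
  constructor
  · rw [univAdj_top, charpoly_scalar_add_vecMulVec, hcard, ZMod.card]
    congr 3
    simp only [dotProduct, mul_one, Finset.sum_const, Finset.card_univ, ZMod.card, nsmul_eq_mul,
      Nat.cast_pow]
    ring
  · rw [univAdj_mulVec_one_of_isRegularOfDegree .top, Nat.cast_sub Fintype.card_pos, hcard]
    congr 1
    ring

/-- For `n = p^r` (`p` prime, `r ≥ 1`), the characteristic polynomial of
`U(P(ℤ_{p^r}))` is `(X - (α(p^r-1) + β(p^r-1) + η p^r + γ)) ⬝ (X - (-α + β(p^r-1) + γ))^{p^r-1}`;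
in particular `α(p^r-1) + β(p^r-1) + η p^r + γ` is an eigenvalue of multiplicity `1` with the
all-ones vector as eigenvector, and `-α + β(p^r-1) + γ` has multiplicity `p^r - 1`. -/
theorem univAdj_powerGraph_zmod_primePow (p : ℕ) (hp : p.Prime) (r : ℕ) (hr : 0 < r)
    (α β γ η : ℝ) (hα : α ≠ 0) :
    haveI : NeZero (p ^ r) := ⟨pow_ne_zero r hp.ne_zero⟩
    Matrix.charpoly (univAdj (addPowerGraph (ZMod (p ^ r))) α β γ η) =
        (X - C (α * ((p : ℝ) ^ r - 1) + β * ((p : ℝ) ^ r - 1) + η * (p : ℝ) ^ r + γ))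
          * (X - C (-α + β * ((p : ℝ) ^ r - 1) + γ)) ^ (p ^ r - 1) ∧
      (univAdj (addPowerGraph (ZMod (p ^ r))) α β γ η).mulVec (fun _ => 1) =
        (α * ((p : ℝ) ^ r - 1) + β * ((p : ℝ) ^ r - 1) + η * (p : ℝ) ^ r + γ) •
          ((fun _ => 1) : ZMod (p ^ r) → ℝ) :=
  univAdj_powerGraph_zmod_primePow_general p hp r α β γ η
end

section
/- Let p and q be distinct primes and fix real numbers α, β, γ, η with η ≠ 0 and α + η = 0. Then the following real numbers are eigenvalues of the universal adjacency matrix U(P(Z_{pq})): β(pq − 1) + γ + η, and the two numbers ( β(2pq − p − q) + 2(η + γ) ± √( β²(p − q)² + 4η²(p − 1)(q − 1) ) ) / 2. -/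
open Matrix

/-!
When `α = -η`, the universal adjacency matrix acts by
`(U x) u = η ∑_{v ∉ N(u)} x v + (β deg u + γ) x u`, the sum running over the closed
non-neighbourhood of `u`. The Chinese remainder theorem identifies `ℤ_{pq}` with the ring
`ℤ_p × ℤ_q`, whose additive cyclic subgroups are its principal ideals; so `v` is a multiple
of `u` iff every coordinate where `u` vanishes is one where `v` vanishes. Hence `0` and the
units are adjacent to every other vertex, while `P = ℤ_p^× × 0` and `Q = 0 × ℤ_q^×` are
cliques with no edge between them. The indicator of `0` is an eigenvector for
`β(pq - 1) + γ + η`, and the vectors constant on `P`, constant on `Q` and zero elsewhere form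
an invariant plane on which `U` acts by
`[[β(pq - q) + γ + η, η(q - 1)], [η(p - 1), β(pq - p) + γ + η]]`; the remaining two numbers
are the eigenvalues of this matrix.
-/

open Finset Module.End

lemma Matrix.hasEigenvalue_toLin'_of_mulVec_eq {n R : Type*} [Fintype n] [DecidableEq n]
    [CommRing R] {A : Matrix n n R} {μ : R} {x : n → R} (hx : x ≠ 0) (h : A *ᵥ x = μ • x) :
    HasEigenvalue (toLin' A) μ :=
  hasEigenvalue_of_hasEigenvector ⟨by rwa [mem_eigenspace_iff, toLin'_apply], hx⟩

lemma SimpleGraph.degree_add_card_compl_neighborFinset {V : Type*} [Fintype V] [DecidableEq V]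
    (G : SimpleGraph V) [DecidableRel G.Adj] (u : V) :
    G.degree u + #(G.neighborFinset u)ᶜ = Fintype.card V := by
  rw [← card_neighborFinset_eq_degree, card_add_card_compl]

section UnivAdj

variable {V W : Type*} [Fintype V] [Fintype W] (α β γ η : ℝ)

lemma univAdj_eq [DecidableEq V] (G : SimpleGraph V) [DecidableRel G.Adj] :
    univAdj G α β γ η = α • G.adjMatrix ℝ + β • diagonal (fun v => (G.degree v : ℝ))
      + γ • (1 : Matrix V V ℝ) + η • of (fun _ _ => (1 : ℝ)) := by
  unfold univAdj
  congr!

lemma reindex_univAdj {G : SimpleGraph V} {G' : SimpleGraph W} (e : G ≃g G') :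
    reindex e e (univAdj G α β γ η) = univAdj G' α β γ η := by
  classical
  ext i j
  simp only [univAdj_eq, reindex_apply, submatrix_apply, Matrix.add_apply, Matrix.smul_apply,
    SimpleGraph.adjMatrix_apply, diagonal_apply, Matrix.one_apply, of_apply, smul_eq_mul]
  have hadj : G.Adj ((e : V ≃ W).symm i) ((e : V ≃ W).symm j) ↔ G'.Adj i j :=
    e.symm.map_adj_iff
  have hdeg : G.degree ((e : V ≃ W).symm i) = G'.degree i := e.symm.degree_eq i
  rw [hadj, Equiv.apply_eq_iff_eq, hdeg]

lemma SimpleGraph.Iso.hasEigenvalue_univAdj_iff [DecidableEq V] [DecidableEq W]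
    {G : SimpleGraph V} {G' : SimpleGraph W} (e : G ≃g G') (μ : ℝ) :
    HasEigenvalue (toLin' (univAdj G α β γ η)) μ ↔
      HasEigenvalue (toLin' (univAdj G' α β γ η)) μ := by
  simp only [hasEigenvalue_iff_isRoot_charpoly, Matrix.charpoly_toLin',
    ← reindex_univAdj α β γ η e, charpoly_reindex]

variable {α β γ η} [DecidableEq V] (G : SimpleGraph V)

lemma univAdj_mulVec_apply_of_add_eq_zero [DecidableRel G.Adj] (hαη : α + η = 0)
    (x : V → ℝ) (u : V) :
    (univAdj G α β γ η *ᵥ x) u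
      = η * ∑ v ∈ (G.neighborFinset u)ᶜ, x v + (β * G.degree u + γ) * x u := by
  rw [univAdj_eq, eq_neg_of_add_eq_zero_left hαη]
  simp only [add_mulVec, smul_mulVec, Pi.add_apply, Pi.smul_apply, mulVec_diagonal,
    one_mulVec, smul_eq_mul, SimpleGraph.adjMatrix_mulVec_apply]
  have hJ : (of fun _ _ => (1 : ℝ) : Matrix V V ℝ) *ᵥ x = fun _ => ∑ v, x v := by
    ext; simp [mulVec, dotProduct]
  rw [hJ, ← sum_add_sum_compl (G.neighborFinset u) x]
  ring

theorem univAdj_hasEigenvalue_of_forall_adj (hαη : α + η = 0) {w : V}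
    (hw : ∀ v, v ≠ w → G.Adj w v) :
    HasEigenvalue (toLin' (univAdj G α β γ η)) (β * (Fintype.card V - 1) + γ + η) := by
  classical
  have hcompl : (G.neighborFinset w)ᶜ = {w} := by
    ext v
    simpa only [mem_compl, SimpleGraph.mem_neighborFinset, mem_singleton] using
      ⟨not_imp_comm.1 (hw v), fun h => h ▸ G.loopless.irrefl w⟩
  have hdeg : (G.degree w : ℝ) = Fintype.card V - 1 := by
    have := G.degree_add_card_compl_neighborFinset w
    rw [hcompl, card_singleton] at this
    rw [← this]; push_cast; ring
  refine hasEigenvalue_toLin'_of_mulVec_eq (x := Pi.single w 1)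
    (Function.ne_iff.2 ⟨w, by simp⟩) (funext fun u => ?_)
  rw [univAdj_mulVec_apply_of_add_eq_zero G hαη, sum_pi_single', Pi.smul_apply, smul_eq_mul]
  obtain rfl | hu := eq_or_ne u w
  · rw [hcompl, if_pos (mem_singleton_self u), Pi.single_eq_same, hdeg]
    ring
  · have hw' : w ∉ (G.neighborFinset u)ᶜ := by simpa using (hw u hu).symm
    simp [hw', hu]

theorem univAdj_hasEigenvalue_of_two_blocks [DecidableRel G.Adj] (hαη : α + η = 0)
    (hη : η ≠ 0) {P Q : Finset V} (hPQ : Disjoint P Q) (hP : P.Nonempty) (hQ : Q.Nonempty)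
    (hPcompl : ∀ u ∈ P, (G.neighborFinset u)ᶜ = insert u Q)
    (hQcompl : ∀ u ∈ Q, (G.neighborFinset u)ᶜ = insert u P)
    (hrest : ∀ u ∉ P ∪ Q, ∀ v ∈ P ∪ Q, G.Adj u v) {μ : ℝ}
    (hμ : (μ - (β * (Fintype.card V - 1 - #Q) + γ + η)) *
        (μ - (β * (Fintype.card V - 1 - #P) + γ + η)) = η ^ 2 * #P * #Q) :
    HasEigenvalue (toLin' (univAdj G α β γ η)) μ := by
  -- `(a, b)` is an eigenvector for `μ` of the quotient matrix
  -- `[[β(n - 1 - #Q) + γ + η, η #Q], [η #P, β(n - 1 - #P) + γ + η]]`.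
  set a := η * #Q
  set b := μ - (β * (Fintype.card V - 1 - #Q) + γ + η)
  set x : V → ℝ := fun v => if v ∈ P then a else if v ∈ Q then b else 0 with hx
  have hxP : ∀ v ∈ P, x v = a := fun v hv => if_pos hv
  have hxQ : ∀ v ∈ Q, x v = b := fun v hv => by
    simp only [hx, if_neg (disjoint_right.1 hPQ hv), if_pos hv]
  have hdeg : ∀ {u S}, (G.neighborFinset u)ᶜ = insert u S → u ∉ S →
      (G.degree u : ℝ) = Fintype.card V - 1 - #S := fun {u S} h hu => by
    have := G.degree_add_card_compl_neighborFinset u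
    rw [h, card_insert_of_notMem hu] at this
    rw [← this]; push_cast; ring
  obtain ⟨v₀, hv₀⟩ := hP
  have hx0 : x ≠ 0 := Function.ne_iff.2
    ⟨v₀, by rw [hxP v₀ hv₀]; exact mul_ne_zero hη (Nat.cast_ne_zero.2 hQ.card_pos.ne')⟩
  refine hasEigenvalue_toLin'_of_mulVec_eq hx0 (funext fun u => ?_)
  rw [univAdj_mulVec_apply_of_add_eq_zero G hαη, Pi.smul_apply, smul_eq_mul]
  by_cases huP : u ∈ P
  · have huQ : u ∉ Q := disjoint_left.1 hPQ huP
    rw [hPcompl u huP, sum_insert huQ, sum_congr rfl hxQ, sum_const, nsmul_eq_mul,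
      hdeg (hPcompl u huP) huQ, hxP u huP]
    ring
  by_cases huQ : u ∈ Q
  · rw [hQcompl u huQ, sum_insert huP, sum_congr rfl hxP, sum_const, nsmul_eq_mul,
      hdeg (hQcompl u huQ) huP, hxQ u huQ]
    linear_combination -hμ
  · have hxu : x u = 0 := by simp [hx, huP, huQ]
    have hsum : ∑ v ∈ (G.neighborFinset u)ᶜ, x v = 0 := sum_eq_zero fun v hv => by
      have hv' : v ∉ P ∪ Q := fun h => mem_compl.1 hv
        ((G.mem_neighborFinset u v).2 (hrest u (by simp [huP, huQ]) v h))
      simp [hx, (by simpa using hv' : v ∉ P ∧ v ∉ Q)]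
    rw [hsum, hxu]; ring

end UnivAdj

section PowerGraph

lemma addPowerGraph_adj_zero_left {G : Type*} [AddGroup G] {v : G} :
    (addPowerGraph G).Adj 0 v ↔ v ≠ 0 :=
  ⟨fun h => h.1.symm, fun h => ⟨h.symm, 0, Or.inl (zero_smul ℤ v).symm⟩⟩

def AddEquiv.addPowerGraphIso {G H : Type*} [AddGroup G] [AddGroup H] (e : G ≃+ H) :
    addPowerGraph G ≃g addPowerGraph H where
  toEquiv := e.toEquiv
  map_rel_iff' := by simp [addPowerGraph, ← map_zsmul]

lemma exists_zsmul_eq_iff_dvd {R : Type*} [Ring R] (hR : Function.Surjective (Int.cast : ℤ → R))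
    {u v : R} : (∃ m : ℤ, u = m • v) ↔ v ∣ u := by
  refine ⟨fun ⟨m, hm⟩ => ⟨m, by rw [hm, zsmul_eq_mul, Int.cast_comm]⟩, fun ⟨c, hc⟩ => ?_⟩
  obtain ⟨m, rfl⟩ := hR c
  exact ⟨m, by rw [hc, zsmul_eq_mul, Int.cast_comm]⟩

lemma addPowerGraph_adj_iff_dvd {R : Type*} [Ring R]
    (hR : Function.Surjective (Int.cast : ℤ → R)) {u v : R} :
    (addPowerGraph R).Adj u v ↔ u ≠ v ∧ (v ∣ u ∨ u ∣ v) := by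
  simp only [addPowerGraph, exists_or, exists_zsmul_eq_iff_dvd hR]

lemma ZMod.intCast_prod_surjective {m n : ℕ} (h : m.Coprime n) :
    Function.Surjective (Int.cast : ℤ → ZMod m × ZMod n) := by
  simpa [Function.comp_def] using
    (ZMod.chineseRemainder h).surjective.comp (ZMod.intCast_surjective (n := m * n))

lemma ZMod.card_univ_erase_zero (n : ℕ) [NeZero n] :
    (#((univ : Finset (ZMod n)).erase 0) : ℝ) = n - 1 := by
  rw [card_erase_of_mem (mem_univ _), card_univ, ZMod.card, Nat.cast_sub NeZero.one_le,
    Nat.cast_one]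

variable {p q : ℕ} [Fact p.Prime] [Fact q.Prime]

lemma addPowerGraph_zmod_prod_adj_iff (hpq : p ≠ q) {u v : ZMod p × ZMod q} :
    (addPowerGraph (ZMod p × ZMod q)).Adj u v ↔ u ≠ v ∧
      (((v.1 = 0 → u.1 = 0) ∧ (v.2 = 0 → u.2 = 0)) ∨
        ((u.1 = 0 → v.1 = 0) ∧ (u.2 = 0 → v.2 = 0))) := by
  rw [addPowerGraph_adj_iff_dvd (ZMod.intCast_prod_surjective
    ((Nat.coprime_primes Fact.out Fact.out).2 hpq)), prod_dvd_iff, prod_dvd_iff]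
  simp only [GroupWithZero.dvd_iff]

theorem univAdj_addPowerGraph_zmod_prod_hasEigenvalue {α β γ η : ℝ} (hpq : p ≠ q)
    (hαη : α + η = 0) (hη : η ≠ 0) {μ : ℝ}
    (hμ : (μ - (β * (p * q - q) + γ + η)) * (μ - (β * (p * q - p) + γ + η))
      = η ^ 2 * (p - 1) * (q - 1)) :
    HasEigenvalue (toLin' (univAdj (addPowerGraph (ZMod p × ZMod q)) α β γ η)) μ := by
  classical
  have hadj := fun {u v} => addPowerGraph_zmod_prod_adj_iff (u := u) (v := v) hpq
  have hP : (#((univ.erase 0 : Finset (ZMod p)) ×ˢ {(0 : ZMod q)}) : ℝ) = p - 1 := by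
    rw [card_product, card_singleton, mul_one, ZMod.card_univ_erase_zero]
  have hQ : (#({(0 : ZMod p)} ×ˢ (univ.erase 0 : Finset (ZMod q))) : ℝ) = q - 1 := by
    rw [card_product, card_singleton, one_mul, ZMod.card_univ_erase_zero]
  have hcard : (Fintype.card (ZMod p × ZMod q) : ℝ) = p * q := by
    rw [Fintype.card_prod, ZMod.card, ZMod.card, Nat.cast_mul]
  refine univAdj_hasEigenvalue_of_two_blocks _ hαη hη (P := (univ.erase 0) ×ˢ {0})
    (Q := {0} ×ˢ (univ.erase 0)) ?_ ⟨(1, 0), by simp⟩ ⟨(0, 1), by simp⟩ ?_ ?_ ?_ ?_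
  · exact disjoint_product.2 (Or.inl (disjoint_singleton_right.2 (notMem_erase _ _)))
  · rintro u hu
    ext v
    simp only [mem_compl, SimpleGraph.mem_neighborFinset, hadj, mem_insert, mem_product,
      mem_erase, mem_singleton, mem_univ, Prod.ext_iff] at hu ⊢
    grind
  · rintro u hu
    ext v
    simp only [mem_compl, SimpleGraph.mem_neighborFinset, hadj, mem_insert, mem_product,
      mem_erase, mem_singleton, mem_univ, Prod.ext_iff] at hu ⊢
    grind
  · intro u hu v hv
    simp only [hadj, mem_union, mem_product, mem_erase, mem_singleton, mem_univ] at hu hv ⊢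
    grind
  · rw [hP, hQ, hcard]
    linear_combination hμ

end PowerGraph

/-- For distinct primes `p, q` and reals `α, β, γ, η` with `η ≠ 0` and
`α + η = 0`, the numbers `β(pq-1) + γ + η` and
`(β(2pq-p-q) + 2(η+γ) ± √(β²(p-q)² + 4η²(p-1)(q-1)))/2` are eigenvalues of
`U(P(ℤ_{pq}))`. -/
theorem univAdj_powerGraph_zmod_pq_eigenvalues (p q : ℕ) (hp : p.Prime) (hq : q.Prime)
    (hpq : p ≠ q) (α β γ η : ℝ) (hη : η ≠ 0) (hαη : α + η = 0) :
    haveI : NeZero (p * q) := ⟨Nat.mul_ne_zero hp.ne_zero hq.ne_zero⟩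
    Module.End.HasEigenvalue
        (Matrix.toLin' (univAdj (addPowerGraph (ZMod (p * q))) α β γ η))
        (β * ((p : ℝ) * q - 1) + γ + η) ∧
      Module.End.HasEigenvalue
        (Matrix.toLin' (univAdj (addPowerGraph (ZMod (p * q))) α β γ η))
        ((β * (2 * (p : ℝ) * q - p - q) + 2 * (η + γ)
          + Real.sqrt (β ^ 2 * ((p : ℝ) - q) ^ 2
              + 4 * η ^ 2 * ((p : ℝ) - 1) * ((q : ℝ) - 1))) / 2) ∧
      Module.End.HasEigenvalue
        (Matrix.toLin' (univAdj (addPowerGraph (ZMod (p * q))) α β γ η))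
        ((β * (2 * (p : ℝ) * q - p - q) + 2 * (η + γ)
          - Real.sqrt (β ^ 2 * ((p : ℝ) - q) ^ 2
              + 4 * η ^ 2 * ((p : ℝ) - 1) * ((q : ℝ) - 1))) / 2) := by
  have : NeZero (p * q) := ⟨Nat.mul_ne_zero hp.ne_zero hq.ne_zero⟩
  have := Fact.mk hp
  have := Fact.mk hq
  have hp1 : (1 : ℝ) < p := by exact_mod_cast hp.one_lt
  have hq1 : (1 : ℝ) < q := by exact_mod_cast hq.one_lt
  have hΔ : 0 ≤ β ^ 2 * ((p : ℝ) - q) ^ 2 + 4 * η ^ 2 * ((p : ℝ) - 1) * ((q : ℝ) - 1) :=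
    add_nonneg (by positivity) (mul_nonneg (mul_nonneg (by positivity) (by linarith)) (by linarith))
  have hsq := Real.sq_sqrt hΔ
  have hcard : (Fintype.card (ZMod (p * q)) : ℝ) = p * q := by rw [ZMod.card, Nat.cast_mul]
  have hiso := ((ZMod.chineseRemainder ((Nat.coprime_primes hp hq).2 hpq)).toAddEquiv
    |>.addPowerGraphIso).hasEigenvalue_univAdj_iff α β γ η
  refine ⟨?_, (hiso _).2 ?_, (hiso _).2 ?_⟩
  · have h := univAdj_hasEigenvalue_of_forall_adj (addPowerGraph (ZMod (p * q))) (β := β)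
      (γ := γ) hαη (w := 0) fun v hv => addPowerGraph_adj_zero_left.2 hv
    rwa [hcard] at h
  all_goals
    refine univAdj_addPowerGraph_zmod_prod_hasEigenvalue hpq hαη hη ?_
    linear_combination hsq / 4
end

section
/- Let p and q be distinct primes and fix real numbers α ≠ 0, β, γ, and η = 0. Set λ± = ( β(p + q − 2) + 2γ ± √( (β(p − q))² + 4α²(p − 1)(q − 1) ) ) / 2. Then the characteristic polynomial of the universal adjacency matrix U(co-P(Z_{pq})) of the complement of the power graph of Z_{pq} equals (X − γ)^{φ(pq)+1} · (X − (β(q − 1) + γ))^{p−2} · (X − (β(p − 1) + γ))^{q−2} · (X − λ₊)(X − λ₋); that is, its eigenvalues are γ with multiplicity φ(pq) + 1, β(q − 1) + γ with multiplicity p − 2, β(p − 1) + γ with multiplicity q − 2, and the two simple eigenvalues λ₊ and λ₋. -/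
/-! In a finite cyclic group `y` is a multiple of `x` iff the order of `y` divides that of `x`.
Since the divisors of `pq` are `1, p, q, pq`, two elements of `ℤ_{pq}` are adjacent in the
complement of the power graph iff their orders are `p` and `q`: the complement is the complete
bipartite graph between the `p - 1` elements of order `p` and the `q - 1` elements of order `q`,
together with `φ(pq) + 1` isolated vertices. Hence `U` is a diagonal matrix plus the rank-two
matrix `α (𝟙ₛ 𝟙ₜᵀ + 𝟙ₜ 𝟙ₛᵀ)`, and the matrix determinant lemma evaluates `det (x - U)` at every `x`
distinct from the diagonal entries, which determines the characteristic polynomial. What remains is the quadratic `(x - a)(x - b) - α²(p - 1)(q - 1)`, whose roots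
are `λ±`. -/

open Matrix Polynomial

open Finset

@[to_additive]
theorem IsCyclic.mem_zpowers_iff_orderOf_dvd {α : Type*} [Group α] [Finite α] [IsCyclic α]
    {x y : α} : y ∈ Subgroup.zpowers x ↔ orderOf y ∣ orderOf x := by
  classical
  have := Fintype.ofFinite α
  refine ⟨orderOf_dvd_of_mem_zpowers, fun h => ?_⟩
  -- `a ^ n = 1` has at most `n` solutions in a cyclic group, and `zpowers x` supplies
  -- `orderOf x` of them for `n = orderOf x`.
  have hsub : (Subgroup.zpowers x : Set α).toFinset ⊆ ({a : α | a ^ orderOf x = 1} : Finset α) := by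
    intro a ha
    simpa using orderOf_dvd_iff_pow_eq_one.mp (orderOf_dvd_of_mem_zpowers (by simpa using ha))
  have hcard : #{a : α | a ^ orderOf x = 1} ≤ #(Subgroup.zpowers x : Set α).toFinset := by
    rw [← Set.ncard_eq_toFinset_card', ← Nat.card_coe_set_eq, SetLike.coe_sort_coe,
      Nat.card_zpowers]
    exact IsCyclic.card_pow_eq_one_le (orderOf_pos x)
  have hy : y ∈ ({a : α | a ^ orderOf x = 1} : Finset α) := by
    simpa using orderOf_dvd_iff_pow_eq_one.mp h
  rw [← Finset.eq_of_subset_of_card_le hsub hcard] at hy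
  simpa using hy

theorem Nat.not_dvd_and_not_dvd_iff_of_dvd_mul {p q d e : ℕ} (hp : p.Prime) (hq : q.Prime)
    (hpq : p ≠ q) (hd : d ∣ p * q) (he : e ∣ p * q) :
    ¬d ∣ e ∧ ¬e ∣ d ↔ d = p ∧ e = q ∨ d = q ∧ e = p := by
  have hdiv : ∀ {k}, k ∣ p * q → k = 1 ∨ k = p ∨ k = q ∨ k = p * q := by
    intro k hk
    obtain ⟨k₁, k₂, h₁, h₂, rfl⟩ := Nat.dvd_mul.mp hk
    rcases (Nat.dvd_prime hp).mp h₁ with rfl | rfl <;>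
      rcases (Nat.dvd_prime hq).mp h₂ with rfl | rfl <;> simp
  have hnpq : ¬p ∣ q := fun h => hpq ((Nat.prime_dvd_prime_iff_eq hp hq).mp h)
  have hnqp : ¬q ∣ p := fun h => hpq ((Nat.prime_dvd_prime_iff_eq hq hp).mp h).symm
  rcases hdiv hd with rfl | rfl | rfl | rfl <;> rcases hdiv he with rfl | rfl | rfl | rfl <;>
    simp [hnpq, hnqp, hpq, hpq.symm, hp.ne_one, hq.ne_one, hp.one_lt.ne, hq.one_lt.ne,
      Nat.mul_eq_left hp.ne_zero, Nat.mul_eq_right hq.ne_zero]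

theorem addPowerGraph_compl_adj_iff {G : Type*} [AddGroup G] [Finite G] [IsAddCyclic G]
    {u v : G} :
    (addPowerGraph G)ᶜ.Adj u v ↔ ¬addOrderOf u ∣ addOrderOf v ∧ ¬addOrderOf v ∣ addOrderOf u := by
  have hmul : ∀ x y : G, (∃ m : ℤ, x = m • y) ↔ addOrderOf x ∣ addOrderOf y := fun x y => by
    rw [← IsAddCyclic.mem_zmultiples_iff_addOrderOf_dvd, AddSubgroup.mem_zmultiples_iff]
    simp only [eq_comm]
  simp only [SimpleGraph.compl_adj, addPowerGraph, exists_or, hmul, not_and, not_or]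
  refine ⟨fun h => h.2 h.1, fun h => ⟨?_, fun _ => h⟩⟩
  rintro rfl
  exact h.1 dvd_rfl

section Bipartite

variable {V : Type*} [Fintype V] [DecidableEq V]

theorem Finset.sum_indicator_mul_mul_indicator {R : Type*} [Semiring R] (A B : Finset V)
    (f : V → R) :
    ∑ v, (A : Set V).indicator 1 v * f v * (B : Set V).indicator 1 v = ∑ v ∈ A ∩ B, f v := by
  simp only [Set.indicator_apply, mem_coe, Pi.one_apply, ite_mul, one_mul, zero_mul, mul_ite,
    mul_one, mul_zero]
  rw [sum_ite_mem, sum_ite_mem, univ_inter, inter_comm]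

theorem Finset.prod_eq_pow_mul_pow_mul_pow_of_disjoint {M : Type*} [CommMonoid M]
    {s t : Finset V} (hst : Disjoint s t) {f : V → M} {a b c : M} (ha : ∀ v ∈ s, f v = a)
    (hb : ∀ v ∈ t, f v = b) (hc : ∀ v ∉ s ∪ t, f v = c) :
    ∏ v, f v = a ^ #s * b ^ #t * c ^ #(s ∪ t)ᶜ := by
  rw [← prod_compl_mul_prod (s ∪ t), prod_union hst, prod_eq_pow_card ha, prod_eq_pow_card hb,
    prod_eq_pow_card fun v hv => hc v (mem_compl.mp hv), mul_comm]

namespace Matrix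

noncomputable def bipartiteAdj (R : Type*) [Semiring R] (s t : Finset V) : Matrix V V R :=
  vecMulVec ((s : Set V).indicator 1) ((t : Set V).indicator 1)
    + vecMulVec ((t : Set V).indicator 1) ((s : Set V).indicator 1)

variable {K : Type*} [Field K]

theorem det_diagonal_sub_smul_bipartiteAdj {s t : Finset V} (hst : Disjoint s t)
    {δ : V → K} (hδ : ∀ v, δ v ≠ 0) {a b : K} (ha : ∀ v ∈ s, δ v = a) (hb : ∀ v ∈ t, δ v = b)
    (α : K) :
    (diagonal δ - α • bipartiteAdj K s t).det = (∏ v, δ v) * (1 - α ^ 2 * #s * #t / (a * b)) := by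
  set U : Matrix V (Fin 2) K := (of ![(s : Set V).indicator 1, (t : Set V).indicator 1])ᵀ
  set W : Matrix (Fin 2) V K := of ![(t : Set V).indicator 1, (s : Set V).indicator 1]
  have hUW : α • bipartiteAdj K s t = U * (α • W) := by
    ext u v
    simp [bipartiteAdj, U, W, mul_apply, Fin.sum_univ_two, vecMulVec_apply, mul_add,
      mul_left_comm]
  have hD : IsUnit (diagonal δ).det := by
    simpa [det_diagonal, prod_ne_zero_iff] using hδ
  have hinv : (diagonal δ)⁻¹ = diagonal fun v => (δ v)⁻¹ :=
    inv_eq_left_inv (by simp [diagonal_mul_diagonal, inv_mul_cancel₀ (hδ _)])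
  have hconst : ∀ (A : Finset V) (c : K), (∀ v ∈ A, δ v = c) → ∑ v ∈ A, (δ v)⁻¹ = #A / c :=
    fun A c hc => by
      rw [sum_eq_card_nsmul fun v hv => by rw [hc v hv], nsmul_eq_mul, div_eq_mul_inv]
  have hN : W * diagonal (fun v => (δ v)⁻¹) * U = !![0, #t / b; #s / a, 0] := by
    ext i j
    rw [mul_apply]
    simp only [mul_diagonal, W, U, of_apply, transpose_apply]
    fin_cases i <;> fin_cases j <;>
      simp [sum_indicator_mul_mul_indicator, disjoint_iff_inter_eq_empty.mp hst,
        inter_comm t s, hconst s a ha, hconst t b hb]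
  have h1N : 1 + -(α • !![0, #t / b; #s / a, 0])
      = !![1, -(α * (#t / b)); -(α * (#s / a)), 1] := by
    ext i j
    fin_cases i <;> fin_cases j <;> simp
  rw [hUW, sub_eq_add_neg, ← Matrix.neg_mul, det_add_mul _ _ hD, det_diagonal, hinv,
    Matrix.mul_neg, Matrix.smul_mul, Matrix.smul_mul, hN, h1N, det_fin_two_of]
  ring

theorem charpoly_diagonal_add_smul_bipartiteAdj [Infinite K] {s t : Finset V}
    (hst : Disjoint s t) (hs : s.Nonempty) (ht : t.Nonempty) (a b c α : K) :
    (diagonal (fun v => if v ∈ s then a else if v ∈ t then b else c)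
      + α • bipartiteAdj K s t).charpoly
      = (X - C a) ^ (#s - 1) * (X - C b) ^ (#t - 1) * (X - C c) ^ #(s ∪ t)ᶜ
        * ((X - C a) * (X - C b) - C (α ^ 2 * #s * #t)) := by
  refine Polynomial.eq_of_infinite_eval_eq _ _
    (Set.Infinite.mono (fun x hx => ?_) (Set.toFinite {a, b, c}).infinite_compl)
  simp only [Set.mem_compl_iff, Set.mem_insert_iff, Set.mem_singleton_iff, not_or] at hx
  obtain ⟨hxa, hxb, hxc⟩ := hx
  set d : V → K := fun v => if v ∈ s then a else if v ∈ t then b else c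
  have hds : ∀ v ∈ s, x - d v = x - a := fun v hv => by simp [d, hv]
  have hdt : ∀ v ∈ t, x - d v = x - b := fun v hv => by
    simp [d, hv, disjoint_right.mp hst hv]
  have hdc : ∀ v ∉ s ∪ t, x - d v = x - c := fun v hv => by
    rw [mem_union, not_or] at hv
    simp [d, hv.1, hv.2]
  have hd : ∀ v, x - d v ≠ 0 := fun v => by
    simp only [d]
    split_ifs <;> exact sub_ne_zero.mpr ‹_›
  have hpow : ∀ {y : K} {n : ℕ}, 0 < n → y ^ n = y ^ (n - 1) * y := fun hn => by
    rw [← pow_succ, Nat.sub_add_cancel hn]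
  rw [Set.mem_ofPred_eq, eval_charpoly, scalar_apply, sub_add_eq_sub_sub, diagonal_sub,
    det_diagonal_sub_smul_bipartiteAdj hst hd hds hdt,
    prod_eq_pow_mul_pow_mul_pow_of_disjoint hst hds hdt hdc, hpow hs.card_pos, hpow ht.card_pos]
  simp only [eval_mul, eval_pow, eval_sub, eval_X, eval_C]
  have hxa' := sub_ne_zero.mpr hxa
  have hxb' := sub_ne_zero.mpr hxb
  field_simp

end Matrix

end Bipartite

section CompleteBipartite

variable {V : Type*} {G : SimpleGraph V} {s t : Finset V}

theorem SimpleGraph.degree_eq_of_adj_iff [DecidableEq V] (hst : Disjoint s t)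
    (hG : ∀ u v, G.Adj u v ↔ u ∈ s ∧ v ∈ t ∨ u ∈ t ∧ v ∈ s) (v : V)
    [Fintype (G.neighborSet v)] :
    G.degree v = if v ∈ s then #t else if v ∈ t then #s else 0 := by
  rw [← card_neighborSet_eq_degree, ← Nat.card_eq_fintype_card, Nat.card_coe_set_eq]
  split_ifs with hs ht
  · convert Set.ncard_coe_finset t
    ext u
    simp [hG, hs, Finset.disjoint_left.mp hst hs]
  · convert Set.ncard_coe_finset s
    ext u
    simp [hG, hs, ht]
  · convert Set.ncard_empty V
    ext u
    simp [hG, hs, ht]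

theorem univAdj_eq_of_adj_iff [Fintype V] [DecidableEq V] (hst : Disjoint s t)
    (hG : ∀ u v, G.Adj u v ↔ u ∈ s ∧ v ∈ t ∨ u ∈ t ∧ v ∈ s) (α β γ : ℝ) :
    univAdj G α β γ 0
      = diagonal (fun v => if v ∈ s then β * #t + γ else if v ∈ t then β * #s + γ else γ)
        + α • bipartiteAdj ℝ s t := by
  ext u v
  have hu : u ∈ s → u ∉ t := fun h => Finset.disjoint_left.mp hst h
  have hv : v ∈ s → v ∉ t := fun h => Finset.disjoint_left.mp hst h
  by_cases huv : u = v
  · subst huv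
    by_cases hus : u ∈ s <;> by_cases hut : u ∈ t <;>
      simp_all [univAdj, G.degree_eq_of_adj_iff hst hG, bipartiteAdj, vecMulVec_apply]
  · by_cases hus : u ∈ s <;> by_cases hut : u ∈ t <;> by_cases hvs : v ∈ s <;>
      by_cases hvt : v ∈ t <;> simp_all [univAdj, bipartiteAdj, vecMulVec_apply]

theorem charpoly_univAdj_of_adj_iff [Fintype V] [DecidableEq V] (hst : Disjoint s t)
    (hs : s.Nonempty) (ht : t.Nonempty)
    (hG : ∀ u v, G.Adj u v ↔ u ∈ s ∧ v ∈ t ∨ u ∈ t ∧ v ∈ s) (α β γ : ℝ) :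
    (univAdj G α β γ 0).charpoly
      = (X - C (β * #t + γ)) ^ (#s - 1) * (X - C (β * #s + γ)) ^ (#t - 1)
        * (X - C γ) ^ #(s ∪ t)ᶜ
        * ((X - C (β * #t + γ)) * (X - C (β * #s + γ)) - C (α ^ 2 * #s * #t)) := by
  rw [univAdj_eq_of_adj_iff hst hG, charpoly_diagonal_add_smul_bipartiteAdj hst hs ht]

end CompleteBipartite

theorem Polynomial.X_sub_C_mul_X_sub_C_sub_C {R : Type*} [CommRing R] {a b k l₁ l₂ : R}
    (h₁ : l₁ + l₂ = a + b) (h₂ : l₁ * l₂ = a * b - k) :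
    (X - C a) * (X - C b) - C k = (X - C l₁) * (X - C l₂) := by
  have h₁' : C l₁ + C l₂ = C a + C b := by simp only [← C_add, h₁]
  have h₂' : C l₁ * C l₂ = C a * C b - C k := by simp only [← C_mul, ← C_sub, h₂]
  linear_combination (X : R[X]) * h₁' - h₂'

theorem ZMod.card_addOrderOf_eq_sub_one {n d : ℕ} [NeZero n] (hd : d.Prime) (hdn : d ∣ n) :
    #{v : ZMod n | addOrderOf v = d} = d - 1 := by
  rw [IsAddCyclic.card_addOrderOf_eq_totient (by rwa [ZMod.card]), Nat.totient_prime hd]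

theorem addPowerGraph_zmod_mul_compl_adj_iff {p q : ℕ} (hp : p.Prime) (hq : q.Prime)
    (hpq : p ≠ q) [NeZero (p * q)] {u v : ZMod (p * q)} :
    (addPowerGraph (ZMod (p * q)))ᶜ.Adj u v ↔
      addOrderOf u = p ∧ addOrderOf v = q ∨ addOrderOf u = q ∧ addOrderOf v = p :=
  addPowerGraph_compl_adj_iff.trans <| Nat.not_dvd_and_not_dvd_iff_of_dvd_mul hp hq hpq
    (by simpa [ZMod.card] using addOrderOf_dvd_card (x := u))
    (by simpa [ZMod.card] using addOrderOf_dvd_card (x := v))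

theorem Nat.totient_mul_add_one_of_prime {p q : ℕ} (hp : p.Prime) (hq : q.Prime) (hpq : p ≠ q) :
    Nat.totient (p * q) + 1 = p * q - (p - 1 + (q - 1)) := by
  rw [Nat.totient_mul ((Nat.coprime_primes hp hq).mpr hpq), Nat.totient_prime hp,
    Nat.totient_prime hq]
  obtain ⟨m, rfl⟩ := Nat.exists_eq_add_one_of_ne_zero hp.ne_zero
  obtain ⟨n, rfl⟩ := Nat.exists_eq_add_one_of_ne_zero hq.ne_zero
  simp only [Nat.add_sub_cancel]
  exact (Nat.sub_eq_of_eq_add (by ring)).symm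

theorem charpoly_univAdj_compl_powerGraph_zmod_pq_general (p q : ℕ) (hp : p.Prime)
    (hq : q.Prime) (hpq : p ≠ q) (α β γ : ℝ) :
    haveI : NeZero (p * q) := ⟨Nat.mul_ne_zero hp.ne_zero hq.ne_zero⟩
    Matrix.charpoly (univAdj (addPowerGraph (ZMod (p * q)))ᶜ α β γ 0) =
      (X - C γ) ^ (Nat.totient (p * q) + 1)
        * (X - C (β * ((q : ℝ) - 1) + γ)) ^ (p - 2)
        * (X - C (β * ((p : ℝ) - 1) + γ)) ^ (q - 2)
        * (X - C ((β * ((p : ℝ) + q - 2) + 2 * γ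
            + Real.sqrt ((β * ((p : ℝ) - q)) ^ 2
                + 4 * α ^ 2 * ((p : ℝ) - 1) * ((q : ℝ) - 1))) / 2))
        * (X - C ((β * ((p : ℝ) + q - 2) + 2 * γ
            - Real.sqrt ((β * ((p : ℝ) - q)) ^ 2
                + 4 * α ^ 2 * ((p : ℝ) - 1) * ((q : ℝ) - 1))) / 2)) := by
  have : NeZero (p * q) := ⟨Nat.mul_ne_zero hp.ne_zero hq.ne_zero⟩
  set s : Finset (ZMod (p * q)) := {v | addOrderOf v = p}
  set t : Finset (ZMod (p * q)) := {v | addOrderOf v = q}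
  have hs : #s = p - 1 := ZMod.card_addOrderOf_eq_sub_one hp (dvd_mul_right p q)
  have ht : #t = q - 1 := ZMod.card_addOrderOf_eq_sub_one hq (dvd_mul_left q p)
  have hst : Disjoint s t := disjoint_filter.mpr fun v _ hvp hvq => hpq (hvp.symm.trans hvq)
  have hrest : #(s ∪ t)ᶜ = Nat.totient (p * q) + 1 := by
    rw [card_compl, card_union_of_disjoint hst, hs, ht, ZMod.card,
      Nat.totient_mul_add_one_of_prime hp hq hpq]
  have hG : ∀ u v, (addPowerGraph (ZMod (p * q)))ᶜ.Adj u v ↔ u ∈ s ∧ v ∈ t ∨ u ∈ t ∧ v ∈ s :=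
    fun u v => by
      simpa only [s, t, mem_filter_univ] using addPowerGraph_zmod_mul_compl_adj_iff hp hq hpq
  set r := Real.sqrt ((β * ((p : ℝ) - q)) ^ 2 + 4 * α ^ 2 * ((p : ℝ) - 1) * ((q : ℝ) - 1))
  have hp1 : (1 : ℝ) ≤ p := Nat.one_le_cast.mpr hp.one_le
  have hq1 : (1 : ℝ) ≤ q := Nat.one_le_cast.mpr hq.one_le
  have hr : r ^ 2 = (β * ((p : ℝ) - q)) ^ 2 + 4 * α ^ 2 * ((p : ℝ) - 1) * ((q : ℝ) - 1) :=
    Real.sq_sqrt (by positivity)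
  rw [charpoly_univAdj_of_adj_iff hst (card_pos.mp (hs ▸ Nat.sub_pos_of_lt hp.one_lt))
      (card_pos.mp (ht ▸ Nat.sub_pos_of_lt hq.one_lt)) hG,
    hs, ht, hrest, Nat.sub_sub, Nat.sub_sub, Nat.cast_sub hp.one_le, Nat.cast_sub hq.one_le,
    Nat.cast_one, X_sub_C_mul_X_sub_C_sub_C (l₁ := (β * ((p : ℝ) + q - 2) + 2 * γ + r) / 2)
      (l₂ := (β * ((p : ℝ) + q - 2) + 2 * γ - r) / 2) (by ring)
      (by linear_combination (-1 / 4 : ℝ) * hr)]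
  ring

/-- For distinct primes `p, q` and reals `α ≠ 0`, `β`, `γ` (and `η = 0`),
the characteristic polynomial of `U(co-P(ℤ_{pq}))` is
`(X - γ)^{φ(pq)+1} (X - (β(q-1)+γ))^{p-2} (X - (β(p-1)+γ))^{q-2} (X - λ₊)(X - λ₋)`,
where `λ± = (β(p+q-2) + 2γ ± √((β(p-q))² + 4α²(p-1)(q-1)))/2`. -/
theorem charpoly_univAdj_compl_powerGraph_zmod_pq (p q : ℕ) (hp : p.Prime)
    (hq : q.Prime) (hpq : p ≠ q) (α β γ : ℝ) (hα : α ≠ 0) :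
    haveI : NeZero (p * q) := ⟨Nat.mul_ne_zero hp.ne_zero hq.ne_zero⟩
    Matrix.charpoly (univAdj (addPowerGraph (ZMod (p * q)))ᶜ α β γ 0) =
      (X - C γ) ^ (Nat.totient (p * q) + 1)
        * (X - C (β * ((q : ℝ) - 1) + γ)) ^ (p - 2)
        * (X - C (β * ((p : ℝ) - 1) + γ)) ^ (q - 2)
        * (X - C ((β * ((p : ℝ) + q - 2) + 2 * γ
            + Real.sqrt ((β * ((p : ℝ) - q)) ^ 2
                + 4 * α ^ 2 * ((p : ℝ) - 1) * ((q : ℝ) - 1))) / 2))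
        * (X - C ((β * ((p : ℝ) + q - 2) + 2 * γ
            - Real.sqrt ((β * ((p : ℝ) - q)) ^ 2
                + 4 * α ^ 2 * ((p : ℝ) - 1) * ((q : ℝ) - 1))) / 2)) :=
  charpoly_univAdj_compl_powerGraph_zmod_pq_general p q hp hq hpq α β γ
end

section
/- Let n = 2^r with r ≥ 1, let Q_n be the generalized quaternion (dicyclic) group of order 4n, and fix real numbers α ≠ 0, β, γ, η. Then the vector X ∈ ℝ^{Q_n} with X_e = 1, X_{a^n} = −1 and all other coordinates 0 satisfies U(P(Q_n))·X = (−α + (4n − 1)β + γ)·X; in particular −α + (4n − 1)β + γ is an eigenvalue of U(P(Q_n)). -/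
open Matrix

/-- The (undirected) power graph of a group: distinct `u`, `v` are adjacent
iff one is an integer power of the other. -/
def powerGraph (G : Type*) [Group G] : SimpleGraph G where
  Adj u v := u ≠ v ∧ ∃ m : ℤ, u = v ^ m ∨ v = u ^ m
  symm := by
    constructor
    rintro u v ⟨huv, m, hm | hm⟩
    · exact ⟨huv.symm, m, Or.inr hm⟩
    · exact ⟨huv.symm, m, Or.inl hm⟩
  loopless := ⟨fun u h => h.1 rfl⟩

/-!
The identity is a power of every element, so it is a universal vertex of the power graph.
Since `Q_n` is a `2`-group whose only element of order `2` is `a^n`, every nontrivial `g` has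
`g ^ (orderOf g / 2) = a^n`, so `a^n` is universal as well. Two distinct universal vertices `u`,
`w` are twins: `A (e_u - e_w) = -(e_u - e_w)`, `J (e_u - e_w) = 0` and both have degree
`|V| - 1`, which gives the eigenvalue `-α + (4n - 1)β + γ`.
-/

section UniversalAdjacency

variable {V : Type*} [DecidableEq V]

lemma single_sub_single_eq_ite {u w : V} (huw : u ≠ w) :
    (Pi.single u 1 - Pi.single w 1 : V → ℝ) =
      fun v => if v = u then 1 else if v = w then -1 else 0 := by
  funext v
  by_cases hu : v = u
  · subst hu; simp [huw]
  · by_cases hw : v = w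
    · subst hw; simp [hu]
    · simp [hu, hw]

variable [Fintype V]

lemma univAdj_apply (G : SimpleGraph V) [DecidableRel G.Adj] (α β γ η : ℝ) (i j : V) :
    univAdj G α β γ η i j =
      α * (if G.Adj i j then 1 else 0) + β * (if i = j then (G.degree i : ℝ) else 0)
        + γ * (if i = j then 1 else 0) + η := by
  simp only [univAdj, Matrix.add_apply, Matrix.smul_apply, SimpleGraph.adjMatrix_apply,
    diagonal_apply, one_apply, of_apply, smul_eq_mul, mul_one]
  congr!

theorem univAdj_mulVec_single_sub_single (G : SimpleGraph V) (α β γ η : ℝ) {u w : V}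
    (huw : u ≠ w) (hu : G.IsUniversal u) (hw : G.IsUniversal w) :
    univAdj G α β γ η *ᵥ (Pi.single u 1 - Pi.single w 1) =
      (-α + ((Fintype.card V : ℝ) - 1) * β + γ) • (Pi.single u 1 - Pi.single w 1) := by
  classical
  have hdeg : ∀ v, G.IsUniversal v → (G.degree v : ℝ) = (Fintype.card V : ℝ) - 1 := by
    intro v hv
    rw [(G.degree_eq_card_sub_one v).mpr hv, Nat.cast_pred (Fintype.card_pos_iff.mpr ⟨v⟩)]
  funext g
  rw [mulVec_sub, mulVec_single_one, mulVec_single_one]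
  simp only [Pi.sub_apply, Pi.smul_apply, col_apply, univAdj_apply, smul_eq_mul]
  by_cases hgu : g = u
  · subst hgu
    simp only [SimpleGraph.irrefl, hu huw, huw, hdeg g hu, Pi.single_eq_same,
      Pi.single_eq_of_ne huw, ↓reduceIte]
    ring
  · by_cases hgw : g = w
    · subst hgw
      simp only [SimpleGraph.irrefl, hw (Ne.symm huw), hgu, hdeg g hw, Pi.single_eq_same,
        Pi.single_eq_of_ne hgu, ↓reduceIte]
      ring
    · simp [(hu (Ne.symm hgu)).symm, (hw (Ne.symm hgw)).symm, hgu, hgw]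

end UniversalAdjacency

section PowerGraph

variable {G : Type*} [Group G]

lemma powerGraph_adj_of_pow_eq {g h : G} (hne : g ≠ h) (m : ℕ) (hm : g ^ m = h) :
    (powerGraph G).Adj g h :=
  ⟨hne, m, Or.inr (by rw [zpow_natCast, hm])⟩

lemma powerGraph_isUniversal_one : (powerGraph G).IsUniversal 1 :=
  fun w hw => (powerGraph G).adj_symm (powerGraph_adj_of_pow_eq hw.symm 0 (pow_zero w))

lemma powerGraph_isUniversal_of_forall_exists_pow_eq {z : G}
    (hz : ∀ g : G, g ≠ 1 → ∃ m : ℕ, g ^ m = z) : (powerGraph G).IsUniversal z := by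
  intro w hzw
  by_cases hw : w = 1
  · subst hw
    exact (powerGraph_isUniversal_one (Ne.symm hzw)).symm
  · obtain ⟨m, hm⟩ := hz w hw
    exact (powerGraph_adj_of_pow_eq (Ne.symm hzw) m hm).symm

end PowerGraph

lemma IsPGroup.exists_pow_eq_of_forall_orderOf_eq {p : ℕ} [Fact p.Prime] {G : Type*} [Group G]
    (hG : IsPGroup p G) {z : G} (hz : ∀ g : G, orderOf g = p → g = z) {g : G} (hg : g ≠ 1) :
    ∃ m : ℕ, g ^ m = z := by
  obtain ⟨k, hk⟩ := hG.exists_orderOf_eq_pow g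
  have hk0 : k ≠ 0 := by
    rintro rfl
    exact hg (orderOf_eq_one_iff.mp (by rw [hk, pow_zero]))
  have hpos : orderOf g ≠ 0 := by rw [hk]; exact pow_ne_zero k (Fact.out : p.Prime).ne_zero
  have hdvd : p ∣ orderOf g := hk ▸ dvd_pow_self p hk0
  exact ⟨orderOf g / p, hz _ (orderOf_pow_orderOf_div hpos hdvd)⟩

lemma ZMod.eq_zero_or_eq_of_add_self_eq_zero {n : ℕ} [NeZero n] {x : ZMod (2 * n)}
    (hx : x + x = 0) : x = 0 ∨ x = n := by
  have hval := congrArg ZMod.val hx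
  rw [ZMod.val_add, ZMod.val_zero] at hval
  have hlt := ZMod.val_lt x
  have hx' : x.val = 0 ∨ x.val = n := by
    obtain ⟨k, hk⟩ := Nat.dvd_of_mod_eq_zero hval
    have : k < 2 := by nlinarith
    interval_cases k <;> omega
  rcases hx' with h | h
  · exact Or.inl ((ZMod.val_eq_zero x).mp h)
  · refine Or.inr (ZMod.val_injective _ ?_)
    rw [h, ZMod.val_natCast_of_lt (by have := NeZero.ne n; omega)]

namespace QuaternionGroup

variable {n : ℕ} [NeZero n]

lemma a_n_ne_one : (a n : QuaternionGroup n) ≠ 1 := by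
  rw [← xa_sq 0]
  exact pow_ne_one_of_lt_orderOf two_ne_zero (by rw [orderOf_xa]; norm_num)

lemma eq_a_n_of_orderOf_eq_two {g : QuaternionGroup n} (hg : orderOf g = 2) : g = a n := by
  cases g with
  | xa i => simp [orderOf_xa] at hg
  | a i =>
    have hii : i + i = 0 := by
      have h := pow_orderOf_eq_one (a i : QuaternionGroup n)
      rwa [hg, sq, a_mul_a, one_def, a.injEq] at h
    rcases ZMod.eq_zero_or_eq_of_add_self_eq_zero hii with rfl | rfl
    · simp at hg
    · rfl

lemma isPGroup_two {r : ℕ} (hn : n = 2 ^ r) : IsPGroup 2 (QuaternionGroup n) :=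
  IsPGroup.of_card (n := r + 2) (by rw [Nat.card_eq_fintype_card, card, hn]; ring)

end QuaternionGroup

theorem univAdj_powerGraph_quaternion_eigen_general (r : ℕ) (n : ℕ) [NeZero n]
    (hn : n = 2 ^ r) (α β γ η : ℝ) :
    (univAdj (powerGraph (QuaternionGroup n)) α β γ η).mulVec
        (fun g => if g = 1 then 1
          else if g = QuaternionGroup.a (n : ZMod (2 * n)) then -1 else 0) =
      (-α + (4 * (n : ℝ) - 1) * β + γ) •
      ((fun g => if g = 1 then 1
          else if g = QuaternionGroup.a (n : ZMod (2 * n)) then -1 else 0) :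
        QuaternionGroup n → ℝ) := by
  have hz : (QuaternionGroup.a n : QuaternionGroup n) ≠ 1 := QuaternionGroup.a_n_ne_one
  have hz_universal : (powerGraph (QuaternionGroup n)).IsUniversal (QuaternionGroup.a n) :=
    powerGraph_isUniversal_of_forall_exists_pow_eq fun _ hg =>
      (QuaternionGroup.isPGroup_two hn).exists_pow_eq_of_forall_orderOf_eq
        (fun _ => QuaternionGroup.eq_a_n_of_orderOf_eq_two) hg
  rw [← single_sub_single_eq_ite hz.symm,
    univAdj_mulVec_single_sub_single _ _ _ _ _ hz.symm powerGraph_isUniversal_one hz_universal,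
    QuaternionGroup.card, Nat.cast_mul, Nat.cast_ofNat]

/-- For `n = 2^r` (`r ≥ 1`) and the generalized quaternion group `Q_n`,
the vector with value `1` at the identity, `-1` at `a^n` and `0` elsewhere is an
eigenvector of `U(P(Q_n))` with eigenvalue `-α + (4n - 1)β + γ`. -/
theorem univAdj_powerGraph_quaternion_eigen (r : ℕ) (hr : 1 ≤ r) (n : ℕ) [NeZero n]
    (hn : n = 2 ^ r) (α β γ η : ℝ) (hα : α ≠ 0) :
    (univAdj (powerGraph (QuaternionGroup n)) α β γ η).mulVec
        (fun g => if g = 1 then 1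
          else if g = QuaternionGroup.a (n : ZMod (2 * n)) then -1 else 0) =
      (-α + (4 * (n : ℝ) - 1) * β + γ) •
      ((fun g => if g = 1 then 1
          else if g = QuaternionGroup.a (n : ZMod (2 * n)) then -1 else 0) :
        QuaternionGroup n → ℝ) :=
  univAdj_powerGraph_quaternion_eigen_general r n hn α β γ η
end
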